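/- arXiv:2109.13422 — 3 statements merged into one kernel-verified Lean document; each statement's English description precedes it below -/
import Mathlib

section
/- If G is a 2-connected finite simple graph containing a path with ℓ edges, then G contains a cycle of length greater than √(2ℓ). -/
/-!
By 2-connectivity the ends of the path lie on a common cycle `C` (Whitney). The vertices of `C`
cut the path into at most `|C| - 1` subpaths meeting `C` only in their ends, so one of them has
length `s ≥ ℓ / (|C| - 1)`. Closing it up with the longer arc of `C` between its ends gives a
cycle of length `d ≥ |C| / 2 + s`, and `d ^ 2 ≥ 2 |C| s > 2 ℓ` by AM-GM.
-/

def TwoConnected {V : Type*} [Fintype V] (G : SimpleGraph V) : Prop :=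
  3 ≤ Fintype.card V ∧ ∀ v : V, (G.induce ({v}ᶜ : Set V)).Connected

namespace SimpleGraph

variable {V : Type*} {G : SimpleGraph V}

namespace Walk

variable {v x y : V}

structure IsEar (S : Set V) (p : G.Walk x y) : Prop where
  isPath : p.IsPath
  ne : x ≠ y
  start_mem : x ∈ S
  end_mem : y ∈ S
  eq_or_eq_of_mem : ∀ z ∈ p.support, z ∈ S → z = x ∨ z = y

theorem IsEar.length_pos {S : Set V} {p : G.Walk x y} (hp : p.IsEar S) : 0 < p.length :=
  Nat.pos_of_ne_zero fun h => hp.ne (eq_of_length_eq_zero h)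

theorem exists_eq_append_of_end_mem (S : Set V) [DecidablePred (· ∈ S)] :
    ∀ {a b : V} (q : G.Walk a b), b ∈ S →
      ∃ (m : V) (pre : G.Walk a m) (post : G.Walk m b),
        q = pre.append post ∧ pre.support.filter (· ∈ S) = [m]
  | _, _, .nil, hb => ⟨_, .nil, .nil, rfl, by simp [hb]⟩
  | a, _, .cons h q, hb => by
    by_cases ha : a ∈ S
    · exact ⟨a, .nil, .cons h q, rfl, by simp [ha]⟩
    · obtain ⟨m, pre, post, rfl, hpre⟩ := exists_eq_append_of_end_mem S q hb
      exact ⟨m, .cons h pre, post, rfl, by simp [ha, hpre]⟩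

theorem IsPath.isEar_of_filter_support_tail {S : Set V} [DecidablePred (· ∈ S)]
    {p : G.Walk x y} (hp : p.IsPath) (hx : x ∈ S) (hS : p.support.tail.filter (· ∈ S) = [y]) :
    p.IsEar S := by
  have hmem {z} (hz : z ∈ p.support.tail) (hzS : z ∈ S) : z = y := by
    have : z ∈ p.support.tail.filter (· ∈ S) := List.mem_filter.2 ⟨hz, by simpa using hzS⟩
    rwa [hS, List.mem_singleton] at this
  refine ⟨hp, fun hxy => ?_, hx, ?_, fun z hz hzS => ?_⟩
  · subst hxy
    simp [eq_nil_iff_nil.2 (isPath_iff_nil.1 hp)] at hS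
  · have : y ∈ p.support.tail.filter (· ∈ S) := hS ▸ List.mem_singleton_self y
    exact of_decide_eq_true (List.mem_filter.1 this).2
  · exact (p.mem_support_iff.1 hz).imp id (hmem · hzS)

theorem IsPath.exists_isEar_mul_le (S : Set V) [DecidablePred (· ∈ S)] {a b : V}
    {q : G.Walk a b} (hq : q.IsPath) (ha : a ∈ S) (hb : b ∈ S) (hab : a ≠ b) :
    ∃ (x y : V) (r : G.Walk x y), r.IsEar S ∧
      q.length + r.length ≤ (q.support.filter (· ∈ S)).length * r.length := by
  induction hn : q.length using Nat.strong_induction_on generalizing a q with | _ n ih =>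
  cases q with
  | nil => exact absurd rfl hab
  | cons h q =>
    obtain ⟨m, pre, post, rfl, hpre⟩ := exists_eq_append_of_end_mem S q hb
    subst hn
    rw [← cons_append] at hq ⊢
    have hfirst : (cons h pre).IsEar S := hq.of_append_left.isEar_of_filter_support_tail ha hpre
    have hm := hfirst.end_mem
    have hpost : (post.support.filter (· ∈ S)).length =
        1 + (post.support.tail.filter (· ∈ S)).length := by
      rw [← post.cons_tail_support, List.filter_cons_of_pos (by simpa using hm),
        List.length_cons, List.tail_cons, add_comm]
    have hcount : (((cons h pre).append post).support.filter (· ∈ S)).length =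
        1 + (post.support.filter (· ∈ S)).length := by
      simp [support_append, ha, hpre, hpost, add_comm]
    rw [hcount]
    by_cases hmb : m = b
    · subst hmb
      obtain rfl : post = .nil := eq_nil_iff_nil.2 (isPath_iff_nil.1 hq.of_append_right)
      exact ⟨a, m, _, hfirst, by simp [hm]; omega⟩
    obtain ⟨x, y, r, hr, hle⟩ := ih post.length (by simp) hq.of_append_right hm hmb rfl
    have := hr.length_pos
    rcases le_total (cons h pre).length r.length with hlen | hlen
    · exact ⟨x, y, r, hr, by rw [length_append]; nlinarith⟩
    · exact ⟨a, m, _, hfirst, by rw [length_append]; nlinarith⟩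

theorem IsEar.isCycle_append {S : Set V} {r : G.Walk x y} (hr : r.IsEar S) {p : G.Walk y x}
    (hp : p.IsPath) (hpS : ∀ z ∈ p.support, z ∈ S) (hn : 1 < r.length ∨ 1 < p.length) :
    (r.append p).IsCycle := by
  refine hr.isPath.isCycle_append hp (fun z hzr hzp => ?_) hn
  rcases hr.eq_or_eq_of_mem z (List.mem_of_mem_tail hzr) (hpS z (List.mem_of_mem_tail hzp))
    with rfl | rfl
  · exact (List.nodup_cons.1 (r.cons_tail_support ▸ hr.isPath.support_nodup)).1 hzr
  · exact (List.nodup_cons.1 (p.cons_tail_support ▸ hp.support_nodup)).1 hzp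

theorem IsCycle.exists_arcs {c : G.Walk v v} (hc : c.IsCycle) (hx : x ∈ c.support)
    (hy : y ∈ c.support) (hxy : x ≠ y) :
    ∃ p q : G.Walk y x, p.IsPath ∧ q.IsPath ∧ p.length + q.length = c.length ∧
      ∀ z, z ∈ c.support ↔ z ∈ p.support ∨ z ∈ q.support := by
  classical
  have hc' := hc.rotate hx
  have hy' : y ∈ (c.rotate x hx).support := (mem_support_rotate_iff ..).2 hy
  have hspec := (c.rotate x hx).take_spec hy'
  refine ⟨(c.rotate x hx |>.takeUntil y hy').reverse, c.rotate x hx |>.dropUntil y hy',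
    (hc'.isPath_takeUntil hy').reverse,
    (hspec ▸ hc').isPath_of_append_right (not_nil_of_ne hxy), ?_, fun z => ?_⟩
  · rw [length_reverse, ← length_append, hspec, length_rotate]
  · rw [support_reverse, List.mem_reverse, ← mem_support_append_iff, hspec,
      mem_support_rotate_iff]

theorem IsEar.exists_isCycle_two_mul_length_le {c : G.Walk v v} (hc : c.IsCycle)
    {r : G.Walk x y} (hr : r.IsEar {z | z ∈ c.support}) :
    ∃ (w : V) (d : G.Walk w w), d.IsCycle ∧ c.length + 2 * r.length ≤ 2 * d.length := by
  obtain ⟨p, q, hp, hq, hlen, hmem⟩ := hc.exists_arcs hr.start_mem hr.end_mem hr.ne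
  have := hc.three_le_length
  obtain ⟨a, ha, hac, ha2⟩ : ∃ a : G.Walk y x,
      a.IsPath ∧ (∀ z ∈ a.support, z ∈ c.support) ∧ c.length ≤ 2 * a.length := by
    rcases le_total p.length q.length with h | h
    · exact ⟨q, hq, fun z hz => (hmem z).2 (.inr hz), by omega⟩
    · exact ⟨p, hp, fun z hz => (hmem z).2 (.inl hz), by omega⟩
  refine ⟨x, r.append a, hr.isCycle_append ha hac (.inr (by omega)), ?_⟩
  rw [length_append]
  omega

theorem IsEar.exists_isCycle_mem_support {c : G.Walk v v} (hc : c.IsCycle)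
    {r : G.Walk x y} (hr : r.IsEar {z | z ∈ c.support}) (h2 : 2 ≤ r.length) {t : V}
    (ht : t ∈ c.support) :
    ∃ (w : V) (d : G.Walk w w), d.IsCycle ∧ t ∈ d.support ∧ r.support ⊆ d.support := by
  obtain ⟨p, q, hp, hq, -, hmem⟩ := hc.exists_arcs hr.start_mem hr.end_mem hr.ne
  obtain ⟨a, ha, hac, hta⟩ : ∃ a : G.Walk y x,
      a.IsPath ∧ (∀ z ∈ a.support, z ∈ c.support) ∧ t ∈ a.support := by
    rcases (hmem t).1 ht with h | h
    · exact ⟨p, hp, fun z hz => (hmem z).2 (.inl hz), h⟩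
    · exact ⟨q, hq, fun z hz => (hmem z).2 (.inr hz), h⟩
  refine ⟨x, r.append a, hr.isCycle_append ha hac (.inl (by omega)), ?_, fun z hz => ?_⟩
  · exact (mem_support_append_iff r a).2 (.inr hta)
  · exact (mem_support_append_iff r a).2 (.inl hz)

theorem IsCycle.length_filter_le {c : G.Walk v v} (hc : c.IsCycle)
    [DecidablePred (· ∈ {z | z ∈ c.support})] {l : List V} (hl : l.Nodup) :
    (l.filter (· ∈ {z | z ∈ c.support})).length ≤ c.length := by
  have hsub : l.filter (· ∈ {z | z ∈ c.support}) ⊆ c.support.tail := fun z hz => by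
    rcases c.mem_support_iff.1 (by simpa using (List.mem_filter.1 hz).2) with rfl | hz
    · exact end_mem_tail_support hc.not_nil
    · exact hz
  calc _ ≤ c.support.tail.length := ((hl.filter _).subperm hsub).length_le
    _ = c.length := by simp

end Walk

end SimpleGraph

namespace TwoConnected

open SimpleGraph Walk

variable {V : Type*} [Fintype V] {G : SimpleGraph V}

theorem exists_ne_ne (hG : TwoConnected G) (a b : V) : ∃ w, w ≠ a ∧ w ≠ b :=
  ENat.exists_ne_ne_of_three_le (by simpa using hG.1) a b

theorem exists_walk_notMem_support (hG : TwoConnected G) {w a b : V} (ha : a ≠ w)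
    (hb : b ≠ w) : ∃ p : G.Walk a b, w ∉ p.support := by
  obtain ⟨q⟩ := (hG.2 w).preconnected ⟨a, ha⟩ ⟨b, hb⟩
  refine ⟨q.map (Embedding.induce _).toHom, fun hw => ?_⟩
  obtain ⟨s, -, hs⟩ := List.mem_map.1 (support_map _ q ▸ hw)
  exact s.2 hs

theorem connected (hG : TwoConnected G) : G.Connected := by
  have : Nonempty V := Fintype.card_pos_iff.1 (by have := hG.1; omega)
  refine ⟨fun a b => ?_⟩
  obtain ⟨w, hwa, hwb⟩ := hG.exists_ne_ne a b
  obtain ⟨p, -⟩ := hG.exists_walk_notMem_support hwa.symm hwb.symm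
  exact ⟨p⟩

theorem exists_isCycle_mem_mem_of_adj (hG : TwoConnected G) {u v : V} (huv : G.Adj u v) :
    ∃ (w : V) (c : G.Walk w w), c.IsCycle ∧ u ∈ c.support ∧ v ∈ c.support := by
  classical
  obtain ⟨z, hzu, hzv⟩ := hG.exists_ne_ne u v
  obtain ⟨q, hq⟩ := hG.exists_walk_notMem_support huv.ne' hzu
  cases q with
  | nil => exact absurd rfl hzv
  | @cons _ t _ hvt q =>
    have htu : t ≠ u := fun h => hq (by subst h; simp)
    obtain ⟨r, hr⟩ := hG.exists_walk_notMem_support hvt.ne' huv.ne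
    have hvr : v ∉ r.bypass.support := fun h => hr (r.support_bypass_subset_support h)
    refine ⟨u, cons huv (cons hvt r.bypass), ?_, by simp, by simp⟩
    rw [cons_isCycle_iff, cons_isPath_iff, edges_cons, List.mem_cons, not_or, Sym2.eq_iff]
    refine ⟨⟨r.bypass_isPath, hvr⟩, ?_, fun he => hvr (snd_mem_support_of_mem_edges _ he)⟩
    rintro (⟨h, -⟩ | ⟨h, -⟩)
    exacts [huv.ne h, htu h.symm]

theorem exists_isCycle_mem_mem_of_adj_mem (hG : TwoConnected G) {z u w t : V}
    {c : G.Walk z z} (hc : c.IsCycle) (huw : G.Adj u w) (hu : u ∉ c.support)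
    (hw : w ∈ c.support) (ht : t ∈ c.support) (htw : t ≠ w) :
    ∃ (x : V) (d : G.Walk x x), d.IsCycle ∧ u ∈ d.support ∧ t ∈ d.support := by
  classical
  obtain ⟨q, hq⟩ := hG.exists_walk_notMem_support huw.ne htw
  obtain ⟨x, pre, post, hqpre, hpre⟩ :=
    exists_eq_append_of_end_mem {z | z ∈ c.support} q.bypass ht
  have hpre_path : pre.IsPath := hqpre ▸ q.bypass_isPath |>.of_append_left
  have hwpre : w ∉ pre.support := fun h =>
    hq (q.support_bypass_subset_support (hqpre ▸ support_subset_support_append_left pre post h))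
  have hear : (cons huw.symm pre).IsEar {z | z ∈ c.support} :=
    ((cons_isPath_iff _ _).2 ⟨hpre_path, hwpre⟩).isEar_of_filter_support_tail hw hpre
  have hlen : 2 ≤ (cons huw.symm pre).length := by
    have : ¬pre.Nil := not_nil_of_ne fun hux => hu (hux ▸ hear.end_mem)
    simpa [Nat.one_le_iff_ne_zero] using this
  obtain ⟨y, d, hd, htd, hsub⟩ := hear.exists_isCycle_mem_support hc hlen ht
  exact ⟨y, d, hd, hsub (by simp), htd⟩

theorem exists_isCycle_mem_mem (hG : TwoConnected G) {u v : V} (huv : u ≠ v) :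
    ∃ (w : V) (c : G.Walk w w), c.IsCycle ∧ u ∈ c.support ∧ v ∈ c.support := by
  obtain ⟨q⟩ := hG.connected.preconnected u v
  induction q with
  | nil => exact absurd rfl huv
  | @cons u w v huw q ih =>
    by_cases hwv : w = v
    · subst hwv
      exact hG.exists_isCycle_mem_mem_of_adj huw
    obtain ⟨z, c, hc, hwc, hvc⟩ := ih hwv
    by_cases huc : u ∈ c.support
    · exact ⟨z, c, hc, huc, hvc⟩
    · exact hG.exists_isCycle_mem_mem_of_adj_mem hc huw huc hwc hvc (Ne.symm hwv)

end TwoConnected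

theorem two_mul_lt_sq_of_add_le_mul {ℓ s k d : ℕ} (hs : 0 < s) (hℓ : ℓ + s ≤ k * s)
    (hd : k + 2 * s ≤ 2 * d) : 2 * ℓ < d ^ 2 := by
  zify at hℓ hd ⊢
  nlinarith [sq_nonneg ((k : ℤ) - 2 * s), mul_le_mul hd hd (by positivity) (by positivity)]

/-- Dirac's lemma: a 2-connected graph with a path of ℓ edges contains a cycle of
length greater than √(2ℓ). -/
theorem dirac_long_cycle {V : Type*} [Fintype V] (G : SimpleGraph V)
    (h2 : TwoConnected G) (ℓ : ℕ) (u v : V) (p : G.Walk u v)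
    (hp : p.IsPath) (hlen : p.length = ℓ) :
    ∃ (w : V) (c : G.Walk w w), c.IsCycle ∧ (c.length : ℝ) > Real.sqrt (2 * ℓ) := by
  classical
  subst hlen
  by_cases huv : u = v
  · subst huv
    obtain ⟨b, hbu, -⟩ := h2.exists_ne_ne u u
    obtain ⟨w, c, hc, -⟩ := h2.exists_isCycle_mem_mem hbu
    refine ⟨w, c, hc, ?_⟩
    rw [SimpleGraph.Walk.length_eq_zero_iff.2 (SimpleGraph.Walk.isPath_iff_nil.1 hp)]
    simpa using (Nat.succ_pos 2).trans_le hc.three_le_length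
  obtain ⟨z, C, hC, huC, hvC⟩ := h2.exists_isCycle_mem_mem huv
  obtain ⟨x, y, r, hr, hpr⟩ := hp.exists_isEar_mul_le {t | t ∈ C.support} huC hvC huv
  obtain ⟨w, D, hD, hCD⟩ := hr.exists_isCycle_two_mul_length_le hC
  have hcount := hC.length_filter_le hp.support_nodup
  refine ⟨w, D, hD, (Real.sqrt_lt' (by have := hD.three_le_length; positivity)).2 ?_⟩
  exact_mod_cast two_mul_lt_sq_of_add_le_mul hr.length_pos
    (hpr.trans (Nat.mul_le_mul_right _ hcount)) hCD
end

section
/- If G is a 2-connected finite simple graph whose longest cycle has length c (circumference c), then every path in G has fewer than c²/2 edges. -/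
theorem Fintype.exists_ne_ne_of_three_le_card {α : Type*} [Fintype α]
    (h : 3 ≤ Fintype.card α) (a b : α) : ∃ c, c ≠ a ∧ c ≠ b := by
  classical
  have hab : ({a, b} : Finset α).card < (Finset.univ : Finset α).card :=
    (Finset.card_le_two).trans_lt (by rw [Finset.card_univ]; omega)
  obtain ⟨c, -, hc⟩ := Finset.exists_mem_notMem_of_card_lt_card hab
  simp only [Finset.mem_insert, Finset.mem_singleton, not_or] at hc
  exact ⟨c, hc⟩

namespace SimpleGraph

variable {V : Type*} {G : SimpleGraph V}

namespace Walk

variable {u v w x y : V}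

theorem IsPath.append {p : G.Walk u v} {q : G.Walk v w} (hp : p.IsPath) (hq : q.IsPath)
    (h : ∀ y ∈ p.support, y ∈ q.support → y = v) : (p.append q).IsPath := by
  rw [isPath_def, support_append, List.nodup_append]
  refine ⟨hp.support_nodup, hq.support_nodup.tail, fun y hy y' hy' hyy => ?_⟩
  subst hyy
  obtain rfl := h y hy (List.mem_of_mem_tail hy')
  exact (List.nodup_cons.mp (q.cons_tail_support ▸ hq.support_nodup)).1 hy'

theorem IsPath.cons_isCycle_of_one_lt_length {p : G.Walk v u} (hp : p.IsPath) (h : G.Adj u v)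
    (hl : 1 < p.length) : (cons h p).IsCycle :=
  (cons_isCycle_iff p h).mpr ⟨hp, fun he => by
    have := hp.length_eq_one_of_mem_edges (Sym2.eq_swap ▸ he)
    omega⟩

/-- Each edge `ab` of `q` lets `p` advance by at most `c - 1`: if `b` lies on `p`, the initial
segment of `p` up to `b` closes a cycle with the edge `ba`; otherwise the edge `ba` extends `p`
backwards to a longer path, to which induction applies. -/
theorem IsPath.length_le_length_mul {c : ℕ} (hc : 2 ≤ c)
    (hmax : ∀ (w : V) (d : G.Walk w w), d.IsCycle → d.length ≤ c)
    {p : G.Walk u v} (hp : p.IsPath) (q : G.Walk u v) : p.length ≤ q.length * (c - 1) := by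
  classical
  induction q with
  | nil => simp [isPath_iff_nil.mp hp]
  | @cons a b v h q ih =>
    rw [length_cons, Nat.succ_mul]
    by_cases hb : b ∈ p.support
    · have hsegment : (p.takeUntil b hb).length ≤ c - 1 := by
        by_contra! hlong
        have := hmax a _ <| (hp.takeUntil hb).reverse.cons_isCycle_of_one_lt_length h
          (by simp only [length_reverse]; omega)
        simp only [length_cons, length_reverse] at this
        omega
      have hsplit := congrArg length (p.take_spec hb)
      rw [length_append] at hsplit
      have := ih (hp.dropUntil hb)
      omega
    · have := ih ((cons_isPath_iff h.symm p).mpr ⟨hp, hb⟩)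
      rw [length_cons] at this
      omega

theorem two_mul_dist_le_length {D : G.Walk w w} (hu : u ∈ D.support) (hv : v ∈ D.support) :
    2 * G.dist u v ≤ D.length := by
  classical
  have hv' : v ∈ (D.rotate u hu).support := (mem_support_rotate_iff ..).mpr hv
  have hsplit := congrArg length ((D.rotate u hu).take_spec hv')
  rw [length_append, length_rotate] at hsplit
  have h₁ := G.dist_le ((D.rotate u hu).takeUntil v hv')
  have h₂ := G.dist_le ((D.rotate u hu).dropUntil v hv')
  rw [dist_comm] at h₂
  omega

theorem IsCycle.exists_isPath_mem_support {D : G.Walk w w} (hD : D.IsCycle)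
    (hx : x ∈ D.support) (hy : y ∈ D.support) (hxy : x ≠ y) (hu : u ∈ D.support) :
    ∃ A : G.Walk x y, A.IsPath ∧ A.support ⊆ D.support ∧ u ∈ A.support := by
  classical
  set D' := D.rotate x hx
  have hy' : y ∈ D'.support := (mem_support_rotate_iff ..).mpr hy
  have hu' : u ∈ D'.support := (mem_support_rotate_iff ..).mpr hu
  have hD' : ((D'.takeUntil y hy').append (D'.dropUntil y hy')).IsCycle :=
    (D'.take_spec hy').symm ▸ hD.rotate hx
  have hsub : D'.support ⊆ D.support := fun z hz => (mem_support_rotate_iff ..).mp hz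
  rw [← D'.take_spec hy', mem_support_append_iff] at hu'
  rcases hu' with hu' | hu'
  · exact ⟨_, hD'.isPath_of_append_left (fun h => hxy h.eq.symm),
      List.Subset.trans (D'.support_takeUntil_subset_support hy') hsub, hu'⟩
  · refine ⟨_, (hD'.isPath_of_append_right (fun h => hxy h.eq)).reverse, ?_,
      by simpa using hu'⟩
    rw [support_reverse, List.reverse_subset]
    exact List.Subset.trans (D'.support_dropUntil_subset_support hy') hsub

theorem IsPath.exists_isPath_to_first_mem {S : Set V} {p : G.Walk v w} (hp : p.IsPath)
    (hw : w ∈ S) : ∃ x ∈ S, ∃ q : G.Walk v x,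
      q.IsPath ∧ q.support ⊆ p.support ∧ ∀ y ∈ q.support, y ∈ S → y = x := by
  induction p with
  | nil => exact ⟨_, hw, Walk.nil, by simp, by simp, by simp⟩
  | @cons a b w h p ih =>
    by_cases ha : a ∈ S
    · exact ⟨a, ha, Walk.nil, by simp, by simp, by simp⟩
    obtain ⟨hp, hap⟩ := (cons_isPath_iff h p).mp hp
    obtain ⟨x, hx, q, hq, hsub, hfirst⟩ := ih hp hw
    refine ⟨x, hx, cons h q, (cons_isPath_iff h q).mpr ⟨hq, fun h => hap (hsub h)⟩,
      List.cons_subset_cons _ hsub, ?_⟩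
    intro y hy hyS
    rcases List.mem_cons.mp hy with rfl | hy
    · exact absurd hyS ha
    · exact hfirst y hy hyS

end Walk

open Walk

variable {u v w : V}

theorem exists_isPath_notMem_support (hw : (G.induce ({w}ᶜ : Set V)).Connected)
    (hu : u ≠ w) (hv : v ≠ w) : ∃ p : G.Walk u v, p.IsPath ∧ w ∉ p.support := by
  obtain ⟨p, hp⟩ := (hw.preconnected ⟨u, Set.mem_compl_singleton_iff.mpr hu⟩
    ⟨v, Set.mem_compl_singleton_iff.mpr hv⟩).exists_isPath
  have hwp : w ∉ (p.map (Embedding.induce _).toHom).support := by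
    rw [Walk.support_map (Embedding.induce ({w}ᶜ : Set V)).toHom p]
    simp
  exact ⟨_, hp.map Subtype.val_injective, hwp⟩

/-- A path from `v` to `u` avoiding `w` first meets `D` at some `x ≠ w`; with the arc of `D`
from `x` to `w` that contains `u`, and the edge `wv`, it closes the new cycle. -/
theorem exists_isCycle_of_isCycle_of_adj (hw : (G.induce ({w}ᶜ : Set V)).Connected)
    {z : V} {D : G.Walk z z} (hD : D.IsCycle) (hu : u ∈ D.support) (hwD : w ∈ D.support)
    (huw : u ≠ w) (hwv : G.Adj w v) :
    ∃ (y : V) (C : G.Walk y y), C.IsCycle ∧ u ∈ C.support ∧ v ∈ C.support := by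
  by_cases hvD : v ∈ D.support
  · exact ⟨z, D, hD, hu, hvD⟩
  obtain ⟨R, hR, hwR⟩ := exists_isPath_notMem_support hw hwv.ne' huw
  obtain ⟨x, hxD, R', hR', hR'R, hfirst⟩ :=
    hR.exists_isPath_to_first_mem (S := {y | y ∈ D.support}) hu
  have hxw : x ≠ w := fun h => hwR (hR'R (h ▸ R'.end_mem_support))
  obtain ⟨A, hA, hAD, huA⟩ := hD.exists_isPath_mem_support hxD hwD hxw hu
  have hRA : (R'.append A).IsPath :=
    hR'.append hA fun y hy hyA => hfirst y hy (hAD hyA)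
  have hlen : 1 < (R'.append A).length := by
    have hR'len : R'.length ≠ 0 := fun h => hvD (eq_of_length_eq_zero h ▸ hxD)
    have hAlen : A.length ≠ 0 := fun h => hxw (eq_of_length_eq_zero h)
    rw [length_append]
    omega
  refine ⟨w, cons hwv (R'.append A), hRA.cons_isCycle_of_one_lt_length hwv hlen, ?_, ?_⟩
  · simp [huA]
  · simp

end SimpleGraph

namespace TwoConnected

open SimpleGraph Walk

variable {V : Type*} [Fintype V] {G : SimpleGraph V} (hG : TwoConnected G)
include hG

theorem connected_s8 : G.Connected := by
  have : Nonempty V := Fintype.card_pos_iff.mp (by have := hG.1; omega)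
  refine ⟨fun a b => ?_⟩
  obtain ⟨z, hza, hzb⟩ := Fintype.exists_ne_ne_of_three_le_card hG.1 a b
  obtain ⟨p, -⟩ := exists_isPath_notMem_support (hG.2 z) hza.symm hzb.symm
  exact p.reachable

theorem exists_adj_ne {u v : V} (huv : u ≠ v) : ∃ w, G.Adj v w ∧ w ≠ u := by
  obtain ⟨z, hzu, hzv⟩ := Fintype.exists_ne_ne_of_three_le_card hG.1 u v
  obtain ⟨p, -, hup⟩ := exists_isPath_notMem_support (hG.2 u) huv.symm hzu
  cases p with
  | nil => exact absurd rfl hzv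
  | cons h q => exact ⟨_, h, fun h' => hup (by subst h'; simp)⟩

theorem exists_isCycle_of_adj {u v : V} (huv : G.Adj u v) :
    ∃ (z : V) (C : G.Walk z z), C.IsCycle ∧ u ∈ C.support ∧ v ∈ C.support := by
  obtain ⟨w, hvw, hwu⟩ := hG.exists_adj_ne huv.ne
  obtain ⟨R, hR, hvR⟩ := exists_isPath_notMem_support (hG.2 v) hvw.ne' huv.ne
  have hRlen : R.length ≠ 0 := fun h => hwu (eq_of_length_eq_zero h)
  refine ⟨u, cons huv (cons hvw R), ?_, by simp, by simp⟩
  exact ((cons_isPath_iff hvw R).mpr ⟨hR, hvR⟩).cons_isCycle_of_one_lt_length huv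
    (by rw [length_cons]; omega)

theorem exists_isCycle_mem_support {u v : V} (huv : u ≠ v) :
    ∃ (z : V) (C : G.Walk z z), C.IsCycle ∧ u ∈ C.support ∧ v ∈ C.support := by
  obtain ⟨q⟩ := hG.connected_s8.preconnected v u
  induction q with
  | nil => exact absurd rfl huv
  | @cons v w u hvw q ih =>
    by_cases hwu : w = u
    · subst hwu
      exact hG.exists_isCycle_of_adj hvw.symm
    · obtain ⟨z, D, hD, huD, hwD⟩ := ih (Ne.symm hwu)
      exact exists_isCycle_of_isCycle_of_adj (hG.2 w) hD huD hwD (Ne.symm hwu) hvw.symm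

theorem exists_isCycle : ∃ (z : V) (C : G.Walk z z), C.IsCycle := by
  obtain ⟨a⟩ : Nonempty V := Fintype.card_pos_iff.mp (by have := hG.1; omega)
  obtain ⟨b, hba, -⟩ := Fintype.exists_ne_ne_of_three_le_card hG.1 a a
  obtain ⟨z, C, hC, -⟩ := hG.exists_isCycle_mem_support hba
  exact ⟨z, C, hC⟩

theorem two_mul_dist_le {c : ℕ}
    (hmax : ∀ (w : V) (d : G.Walk w w), d.IsCycle → d.length ≤ c) (u v : V) :
    2 * G.dist u v ≤ c := by
  by_cases huv : u = v
  · simp [huv]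
  obtain ⟨z, C, hC, huC, hvC⟩ := hG.exists_isCycle_mem_support huv
  exact (two_mul_dist_le_length huC hvC).trans (hmax z C hC)

end TwoConnected

theorem path_short_of_circumference_general {V : Type*} [Fintype V] (G : SimpleGraph V)
    (h2 : TwoConnected G) (c : ℕ)
    (hmax : ∀ (w : V) (d : G.Walk w w), d.IsCycle → d.length ≤ c) :
    ∀ (u v : V) (p : G.Walk u v), p.IsPath → (p.length : ℝ) < (c : ℝ) ^ 2 / 2 := by
  intro u v p hp
  obtain ⟨z, C, hC⟩ := h2.exists_isCycle
  have hc : 3 ≤ c := hC.three_le_length.trans (hmax z C hC)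
  obtain ⟨q, hq⟩ := h2.connected_s8.exists_walk_length_eq_dist u v
  have hpq := hp.length_le_length_mul (by omega) hmax q
  rw [hq] at hpq
  have key : 2 * p.length < c ^ 2 := calc
    2 * p.length ≤ 2 * G.dist u v * (c - 1) := by
      rw [mul_assoc]
      exact Nat.mul_le_mul_left 2 hpq
    _ ≤ c * (c - 1) := Nat.mul_le_mul_right _ (h2.two_mul_dist_le hmax u v)
    _ < c ^ 2 := by
      rw [sq]
      exact Nat.mul_lt_mul_of_pos_left (by omega) (by omega)
  have : (2 * p.length : ℝ) < (c : ℝ) ^ 2 := by exact_mod_cast key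
  linarith

/-- If a 2-connected graph has circumference c (its longest cycle has length c),
then every path in it has fewer than c²/2 edges. -/
theorem path_short_of_circumference {V : Type*} [Fintype V] (G : SimpleGraph V)
    (h2 : TwoConnected G) (c : ℕ)
    (hcyc : ∃ (w : V) (d : G.Walk w w), d.IsCycle ∧ d.length = c)
    (hmax : ∀ (w : V) (d : G.Walk w w), d.IsCycle → d.length ≤ c) :
    ∀ (u v : V) (p : G.Walk u v), p.IsPath → (p.length : ℝ) < (c : ℝ) ^ 2 / 2 :=
  path_short_of_circumference_general G h2 c hmax
end

section
/- If a finite simple graph G has chromatic number at least n, then G contains every tree on n vertices as a subgraph. -/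
/-!
A graph that is not `k`-colourable has a minimal induced subgraph that is not `k`-colourable, and
every vertex of it has degree at least `k` there: a vertex of smaller degree could be coloured
last, after colouring the rest by minimality. With `k = n - 1`, a tree on `n` vertices embeds into
any nonempty graph of minimum degree at least `n - 1`: remove a leaf, embed the remaining tree, and
send the leaf to a neighbour of its parent's image lying outside the `n - 1` image vertices.
-/

open Finset

namespace SimpleGraph

variable {V W : Type*} {G : SimpleGraph V} {T : SimpleGraph W}

theorem Colorable.of_induce_compl_singleton_of_degree_lt {v : V} [Fintype (G.neighborSet v)]
    {k : ℕ} (hdeg : G.degree v < k) (h : (G.induce {v}ᶜ).Colorable k) : G.Colorable k := by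
  classical
  obtain ⟨C⟩ := h
  have c₀ : Fin k := ⟨0, by omega⟩
  let E : V → Fin k := fun w ↦ if hw : w = v then c₀ else C ⟨w, hw⟩
  obtain ⟨c, -, hc⟩ : ∃ c ∈ (univ : Finset (Fin k)), c ∉ (G.neighborFinset v).image E :=
    exists_mem_notMem_of_card_lt_card <| by simpa using card_image_le.trans_lt hdeg
  have hcE {w : V} (hw : G.Adj v w) : c ≠ E w :=
    fun h ↦ hc (mem_image.2 ⟨w, by simpa using hw, h.symm⟩)
  refine ⟨Coloring.mk (Function.update E v c) fun {a b} hab ↦ ?_⟩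
  by_cases ha : a = v <;> by_cases hb : b = v
  · exact absurd (ha.trans hb.symm) hab.ne
  · subst ha; simpa [Function.update_of_ne hb] using hcE hab
  · subst hb; simpa [Function.update_of_ne ha] using (hcE hab.symm).symm
  · simpa [Function.update_of_ne ha, Function.update_of_ne hb, E, ha, hb] using
      C.valid (show (G.induce {v}ᶜ).Adj ⟨a, ha⟩ ⟨b, hb⟩ from hab)

theorem exists_nonempty_forall_le_degree_induce_of_not_colorable [Fintype V] [DecidableEq V]
    [DecidableRel G.Adj] {k : ℕ} (h : ¬G.Colorable k) :
    ∃ s : Finset V, s.Nonempty ∧ ∀ v : (s : Set V), k ≤ (G.induce s).degree v := by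
  obtain ⟨s, hs⟩ := exists_minimal_of_wellFoundedLT
    (fun s : Finset V ↦ ¬(G.induce (s : Set V)).Colorable k)
    ⟨univ, fun hc ↦ h (hc.of_hom ⟨fun v ↦ ⟨v, mem_univ v⟩, id⟩)⟩
  have hne : s.Nonempty := by
    rw [nonempty_iff_ne_empty]
    rintro rfl
    have : IsEmpty ((∅ : Finset V) : Set V) := ⟨fun v ↦ by simpa using v.2⟩
    exact hs.prop (Colorable.of_isEmpty k)
  refine ⟨s, hne, fun v ↦ ?_⟩
  by_contra! hlt
  refine hs.prop (Colorable.of_induce_compl_singleton_of_degree_lt hlt ?_)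
  have hcol := not_not.1 <| hs.not_prop_of_lt (erase_ssubset v.2)
  refine hcol.of_hom (induceHom (Embedding.induce _).toHom ?_)
  rintro ⟨w, hw⟩ hwv
  simp_all [Subtype.ext_iff]

theorem exists_adj_notMem_of_card_le_degree [DecidableEq V] {v : V} [Fintype (G.neighborSet v)]
    {s : Finset V} (hv : v ∈ s) (h : #s ≤ G.degree v) : ∃ w, G.Adj v w ∧ w ∉ s := by
  obtain ⟨w, hw, hws⟩ := exists_mem_notMem_of_card_lt_card (s := s.erase v)
    (t := G.neighborFinset v) <| by
      rw [card_erase_of_mem hv, card_neighborFinset_eq_degree]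
      have := card_pos.2 ⟨v, hv⟩
      omega
  have hadj : G.Adj v w := (mem_neighborFinset G v w).1 hw
  exact ⟨w, hadj, fun hw ↦ hws (mem_erase.2 ⟨hadj.ne', hw⟩)⟩

theorem IsTree.induce_compl_singleton_of_degree_eq_one {x : W} [Fintype (T.neighborSet x)]
    (hT : T.IsTree) (hx : T.degree x = 1) : (T.induce {x}ᶜ).IsTree :=
  ⟨hT.connected.induce_compl_singleton_of_degree_eq_one hx, hT.isAcyclic.induce _⟩

theorem isContained_of_copy_induce_compl_singleton {x p : W} (hp : ∀ w, T.Adj x w → w = p)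
    (hpx : p ≠ x) (f : Copy (T.induce {x}ᶜ) G) {y : V} (hy : y ∉ Set.range f)
    (hadj : G.Adj (f ⟨p, hpx⟩) y) : T ⊑ G := by
  classical
  let g : W → V := fun w ↦ if hw : w = x then y else f ⟨w, hw⟩
  have hgx : g x = y := dif_pos rfl
  have hg {w : W} (hw : w ≠ x) : g w = f ⟨w, hw⟩ := dif_neg hw
  have hfy {w : W} (hw : w ≠ x) : f ⟨w, hw⟩ ≠ y := fun h ↦ hy ⟨_, h⟩
  refine isContained_iff_exists_le_comap.2 ⟨⟨g, fun a b hab ↦ ?_⟩, fun a b hab ↦ ?_⟩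
  · by_cases ha : a = x <;> by_cases hb : b = x
    · exact ha.trans hb.symm
    · subst ha; exact absurd (hgx.symm.trans (hab.trans (hg hb))) (hfy hb).symm
    · subst hb; exact absurd ((hg ha).symm.trans (hab.trans hgx)) (hfy ha)
    · exact congrArg Subtype.val (f.injective ((hg ha).symm.trans (hab.trans (hg hb))))
  · change G.Adj (g a) (g b)
    by_cases ha : a = x <;> by_cases hb : b = x
    · exact absurd (ha.trans hb.symm) hab.ne
    · subst ha; obtain rfl := hp b hab; rw [hgx, hg hb]; exact hadj.symm
    · subst hb; obtain rfl := hp a hab.symm; rw [hgx, hg ha]; exact hadj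
    · rw [hg ha, hg hb]; exact f.toHom.map_adj (show (T.induce {x}ᶜ).Adj ⟨a, ha⟩ ⟨b, hb⟩ from hab)

theorem IsTree.isContained_of_forall_card_sub_one_le_degree [Fintype W] [Nonempty V]
    [G.LocallyFinite] (hT : T.IsTree) (hdeg : ∀ v, Fintype.card W - 1 ≤ G.degree v) : T ⊑ G := by
  classical
  induction hn : Fintype.card W generalizing W with
  | zero =>
    have := hT.connected.nonempty
    exact absurd hn Fintype.card_ne_zero
  | succ n ih =>
    rcases Nat.eq_zero_or_pos n with rfl | hn0
    · have : Subsingleton W := Fintype.card_le_one_iff_subsingleton.1 hn.le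
      exact ⟨⟨⟨fun _ ↦ Classical.arbitrary V, fun hab ↦ (hab.ne (Subsingleton.elim _ _)).elim⟩,
        fun a b _ ↦ Subsingleton.elim a b⟩⟩
    have : Nontrivial W := Fintype.one_lt_card_iff_nontrivial.1 (by omega)
    obtain ⟨x, hx⟩ := hT.exists_vert_degree_one_of_nontrivial
    obtain ⟨p, hxp, hp⟩ := degree_eq_one_iff_existsUnique_adj.1 hx
    have hcard : Fintype.card ({x}ᶜ : Set W) = n := by
      rw [Fintype.card_compl_set]
      simp [hn]
    obtain ⟨f⟩ := ih (hT.induce_compl_singleton_of_degree_eq_one hx)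
      (fun v ↦ by have := hdeg v; omega) hcard
    obtain ⟨y, hadj, hy⟩ := exists_adj_notMem_of_card_le_degree (G := G)
      (mem_image_of_mem f (mem_univ ⟨p, hxp.ne'⟩)) <| by
        rw [card_image_of_injective _ (show Function.Injective f from f.injective), card_univ,
          hcard]
        have := hdeg (f ⟨p, hxp.ne'⟩)
        omega
    exact isContained_of_copy_induce_compl_singleton hp hxp.ne' f (by simpa using hy) hadj

end SimpleGraph

open SimpleGraph

/-- If a finite simple graph G has chromatic number at least n, then G contains
every tree on n vertices as a subgraph. -/
theorem tree_subgraph_of_chromaticNumber {V W : Type*} [Fintype V] [Fintype W]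
    (G : SimpleGraph V) (T : SimpleGraph W) (n : ℕ)
    (hT : T.IsTree) (hW : Fintype.card W = n)
    (hchrom : (n : ℕ∞) ≤ G.chromaticNumber) :
    ∃ f : W ↪ V, ∀ a b : W, T.Adj a b → G.Adj (f a) (f b) := by
  classical
  have hn : 0 < n := hW ▸ Fintype.card_pos_iff.2 hT.connected.nonempty
  have hcol : ¬G.Colorable (n - 1) := fun h ↦ by
    have := hchrom.trans h.chromaticNumber_le
    norm_cast at this
    omega
  obtain ⟨s, hs, hdeg⟩ := exists_nonempty_forall_le_degree_induce_of_not_colorable hcol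
  have : Nonempty (s : Set V) := hs.coe_sort
  have hTs : T ⊑ G.induce s := hT.isContained_of_forall_card_sub_one_le_degree (by rwa [hW])
  obtain ⟨f, hf⟩ := isContained_iff_exists_le_comap.1 (hTs.trans ⟨Copy.induce G s⟩)
  exact ⟨f, fun a b hab ↦ hf hab⟩
end
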